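/- A smooth symmetric tensor field C on ℝ³ (with coordinates (x,y,z)) is a Killing tensor (∂_c C_{ab} + ∂_a C_{bc} + ∂_b C_{ca} = 0 for all a,b,c) if and only if there exist 20 real constants a₁,…,a₂₀ such that: C_{11} = (a₆/2)y² + (a₁/2)z² + a₄ yz + a₅ y + a₂ z + a₃; C_{12} = (a₁₀/2)z² − (a₆/2)xy − (a₄/2)xz − (a₁₄/2)yz − (a₅/2)x − (a₁₅/2)y + a₁₆ z + a₁₇; C_{13} = (a₁₄/2)y² − (a₄/2)xy − (a₁/2)xz − (a₁₀/2)yz − (a₂/2)x + a₁₈ y − (a₁₁/2)z + a₁₉; C_{22} = (a₆/2)x² + (a₇/2)z² + a₁₄ xz + a₁₅ x + a₁₂ z + a₁₃; C_{23} = (a₄/2)x² − (a₁₄/2)xy − (a₁₀/2)xz − (a₇/2)yz − (a₁₆+a₁₈)x − (a₁₂/2)y − (a₈/2)z + a₂₀; C_{33} = (a₁/2)x² + (a₇/2)y² + a₁₀ xy + a₁₁ x + a₈ y + a₉ (with C symmetric). -/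

import Mathlib

/-- Partial derivative of a scalar field on ℝⁿ in the `a`-th coordinate direction. -/
noncomputable def pd {n : ℕ} (f : (Fin n → ℝ) → ℝ) (a : Fin n) (x : Fin n → ℝ) : ℝ :=
  fderiv ℝ f x (Pi.single a 1)


lemma contDiff_pd {n : ℕ} {f : (Fin n → ℝ) → ℝ} (hf : ContDiff ℝ (⊤ : ℕ∞) f) (a : Fin n) :
    ContDiff ℝ (⊤ : ℕ∞) (pd f a) := by
  exact (hf.fderiv_right (m := (⊤ : ℕ∞)) (by simp)).clm_apply (contDiff_const (c := Pi.single a 1))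

lemma pd_comm {n : ℕ} {f : (Fin n → ℝ) → ℝ} (hf : ContDiff ℝ (⊤ : ℕ∞) f) (a b : Fin n)
    (x : Fin n → ℝ) : pd (pd f a) b x = pd (pd f b) a x := by
  have hsym : IsSymmSndFDerivAt ℝ f x :=
    ContDiffAt.isSymmSndFDerivAt (n := (⊤ : ℕ∞)) hf.contDiffAt (by rw [minSmoothness_of_isRCLikeNormedField]; exact WithTop.coe_le_coe.mpr (le_top : (2 : ℕ∞) ≤ ⊤))
  have hdiff : DifferentiableAt ℝ (fderiv ℝ f) x :=
    ((hf.fderiv_right (m := (⊤ : ℕ∞)) (by simp)).differentiable (by simp)).differentiableAt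
  have key : ∀ v w : Fin n → ℝ,
      fderiv ℝ (fun y => fderiv ℝ f y v) x w = fderiv ℝ (fderiv ℝ f) x w v := by
    intro v w
    rw [fderiv_clm_apply hdiff (differentiableAt_const _)]
    simp
  have ha : pd f a = fun y => fderiv ℝ f y (Pi.single a 1) := rfl
  have hb : pd f b = fun y => fderiv ℝ f y (Pi.single b 1) := rfl
  show fderiv ℝ (pd f a) x (Pi.single b 1) = fderiv ℝ (pd f b) x (Pi.single a 1)
  rw [ha, hb, key, key, hsym.eq]



lemma eq_const_of_pd_zero {n : ℕ} {f : (Fin n → ℝ) → ℝ} (hf : ContDiff ℝ (⊤ : ℕ∞) f)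
    (h : ∀ a x, pd f a x = 0) (x : Fin n → ℝ) : f x = f 0 := by
  apply is_const_of_fderiv_eq_zero (𝕜 := ℝ) (hf.differentiable (by simp))
  intro y
  ext v
  have hv : v = ∑ i, Pi.single i (v i) := (Finset.univ_sum_single v).symm
  rw [ContinuousLinearMap.zero_apply, hv, map_sum]
  have : ∀ i : Fin n, fderiv ℝ f y (Pi.single i (v i)) = v i * pd f i y := by
    intro i
    have : Pi.single i (v i) = v i • (Pi.single i 1 : Fin n → ℝ) := by
      ext j
      by_cases hj : j = i <;> simp [hj, Pi.single_apply]
    rw [this, map_smul]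
    simp [pd]
  simp [this, h]



noncomputable def qform (t : ℝ) (l : Fin 3 → ℝ) (s : Fin 3 → Fin 3 → ℝ) :
    (Fin 3 → ℝ) → ℝ :=
  fun p => t + (l 0 * p 0 + l 1 * p 1 + l 2 * p 2) + (1/2) *
    (s 0 0 * (p 0 * p 0) + s 0 1 * (p 0 * p 1) + s 0 2 * (p 0 * p 2) + s 1 0 * (p 1 * p 0) + s 1 1 * (p 1 * p 1) + s 1 2 * (p 1 * p 2) + s 2 0 * (p 2 * p 0) + s 2 1 * (p 2 * p 1) + s 2 2 * (p 2 * p 2))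

lemma contDiff_qform (t : ℝ) (l : Fin 3 → ℝ) (s : Fin 3 → Fin 3 → ℝ) :
    ContDiff ℝ (⊤ : ℕ∞) (qform t l s) := by
  unfold qform; fun_prop

lemma pd_qform (t : ℝ) (l : Fin 3 → ℝ) (s : Fin 3 → Fin 3 → ℝ)
    (hs : ∀ c d, s c d = s d c) (a : Fin 3) (x : Fin 3 → ℝ) :
    pd (qform t l s) a x = l a + (s a 0 * x 0 + s a 1 * x 1 + s a 2 * x 2) := by
  have hp : ∀ c : Fin 3, HasFDerivAt (fun p : Fin 3 → ℝ => p c)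
      (ContinuousLinearMap.proj c : (Fin 3 → ℝ) →L[ℝ] ℝ) x :=
    fun c => hasFDerivAt_apply c x
  have Hq := ((((((((((hp 0).mul (hp 0)).const_mul (s 0 0)).add
        (((hp 0).mul (hp 1)).const_mul (s 0 1))).add
        (((hp 0).mul (hp 2)).const_mul (s 0 2))).add
        (((hp 1).mul (hp 0)).const_mul (s 1 0))).add
        (((hp 1).mul (hp 1)).const_mul (s 1 1))).add
        (((hp 1).mul (hp 2)).const_mul (s 1 2))).add
        (((hp 2).mul (hp 0)).const_mul (s 2 0))).add
        (((hp 2).mul (hp 1)).const_mul (s 2 1))).add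
        (((hp 2).mul (hp 2)).const_mul (s 2 2))
  have Hl := (((hp 0).const_mul (l 0)).add ((hp 1).const_mul (l 1))).add
        ((hp 2).const_mul (l 2))
  have H := ((hasFDerivAt_const t x).add Hl).add (Hq.const_mul (1/2 : ℝ))
  have hpd : fderiv ℝ (qform t l s) x (Pi.single a 1) = _ := congrFun (congrArg _ H.fderiv) (Pi.single a 1)
  rw [show pd (qform t l s) a x = fderiv ℝ (qform t l s) x (Pi.single a 1) from rfl] at *
  rw [hpd]
  fin_cases a <;>
    simp [ContinuousLinearMap.proj_apply, Pi.single_apply, hs 1 0, hs 2 0, hs 2 1] <;>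
    ring

lemma pd_add {n : ℕ} {f g : (Fin n → ℝ) → ℝ} (hf : Differentiable ℝ f)
    (hg : Differentiable ℝ g) (a : Fin n) (x : Fin n → ℝ) :
    pd (fun y => f y + g y) a x = pd f a x + pd g a x := by
  simp [pd, fderiv_fun_add (hf x) (hg x)]

lemma pd_sub {n : ℕ} {f g : (Fin n → ℝ) → ℝ} (hf : Differentiable ℝ f)
    (hg : Differentiable ℝ g) (a : Fin n) (x : Fin n → ℝ) :
    pd (fun y => f y - g y) a x = pd f a x - pd g a x := by
  simp [pd, fderiv_fun_sub (hf x) (hg x)]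

lemma pd_const {n : ℕ} (c : ℝ) (a : Fin n) (x : Fin n → ℝ) :
    pd (fun _ => c) a x = 0 := by simp [pd]

lemma rep {f : (Fin 3 → ℝ) → ℝ} (hf : ContDiff ℝ (⊤ : ℕ∞) f)
    (h3 : ∀ c d e x, pd (pd (pd f c) d) e x = 0) :
    f = qform (f 0) (fun c => pd f c 0) (fun c d => pd (pd f c) d 0) := by
  set l : Fin 3 → ℝ := fun c => pd f c 0 with hl
  set s : Fin 3 → Fin 3 → ℝ := fun c d => pd (pd f c) d 0 with hs
  have hssym : ∀ c d, s c d = s d c := fun c d => pd_comm hf c d 0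
  have step1 : ∀ c d x, pd (pd f c) d x = s c d := by
    intro c d x
    exact eq_const_of_pd_zero (contDiff_pd (contDiff_pd hf c) d) (fun e y => h3 c d e y) x
  have step2 : ∀ c x, pd f c x = l c + (s c 0 * x 0 + s c 1 * x 1 + s c 2 * x 2) := by
    intro c x
    have hg : ContDiff ℝ (⊤ : ℕ∞) (qform (l c) (s c) (fun _ _ => 0)) := contDiff_qform _ _ _
    have hz : ∀ e y, pd (fun y => pd f c y - qform (l c) (s c) (fun _ _ => 0) y) e y = 0 := by
      intro e y
      rw [pd_sub ((contDiff_pd hf c).differentiable (by simp)) (hg.differentiable (by simp))]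
      rw [step1, pd_qform (l c) (s c) (fun _ _ => 0) (fun _ _ => rfl)]
      ring
    have hcst := eq_const_of_pd_zero (((contDiff_pd hf c)).sub hg) hz x
    have h0 : qform (l c) (s c) (fun _ _ => 0) 0 = l c := by simp [qform]
    have hx : qform (l c) (s c) (fun _ _ => 0) x
        = l c + (s c 0 * x 0 + s c 1 * x 1 + s c 2 * x 2) := by
      simp [qform]; try ring
    simp only [hx, h0] at hcst ⊢
    linarith [hcst]
  funext x
  have hz : ∀ e y, pd (fun y => f y - qform (f 0) l s y) e y = 0 := by
    intro e y
    rw [pd_sub (hf.differentiable (by simp)) ((contDiff_qform _ _ _).differentiable (by simp))]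
    rw [step2, pd_qform _ _ _ hssym]
    ring
  have hcst := eq_const_of_pd_zero (hf.sub (contDiff_qform _ _ _)) hz x
  have h0 : qform (f 0) l s 0 = f 0 := by simp [qform]
  simp only [h0] at hcst
  linarith [hcst]

lemma petersen {α : Type*} (u : α → α → α → α → α → ℝ)
    (h12 : ∀ p q r s t, u p q r s t = u q p r s t)
    (h34 : ∀ p q r s t, u p q r s t = u p q s r t)
    (h45 : ∀ p q r s t, u p q r s t = u p q r t s)
    (hcyc : ∀ p q r s t, u p q r s t + u q r p s t + u r p q s t = 0)
    (a b c d e : α) : u a b c d e = 0 := by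
  have q0 : u c d e a b = u c d a e b := h34 c d e a b
  have q1 : u c d a e b = u c d a b e := h45 c d a e b
  have q2 : u d e c a b = u d e a c b := h34 d e c a b
  have q3 : u d e a c b = u d e a b c := h45 d e a c b
  have q4 : u e c d a b = u c e d a b := h12 e c d a b
  have q5 : u c e d a b = u c e a d b := h34 c e d a b
  have q6 : u c e a d b = u c e a b d := h45 c e a d b
  have q7 : u b d e a c = u b d a e c := h34 b d e a c
  have q8 : u b d a e c = u b d a c e := h45 b d a e c
  have q9 : u d e b a c = u d e a b c := h34 d e b a c
  have q10 : u e b d a c = u b e d a c := h12 e b d a c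
  have q11 : u b e d a c = u b e a d c := h34 b e d a c
  have q12 : u b e a d c = u b e a c d := h45 b e a d c
  have q13 : u b c e a d = u b c a e d := h34 b c e a d
  have q14 : u b c a e d = u b c a d e := h45 b c a e d
  have q15 : u c e b a d = u c e a b d := h34 c e b a d
  have q16 : u e b c a d = u b e c a d := h12 e b c a d
  have q17 : u b e c a d = u b e a c d := h34 b e c a d
  have q18 : u b c d a e = u b c a d e := h34 b c d a e
  have q19 : u c d b a e = u c d a b e := h34 c d b a e
  have q20 : u d b c a e = u b d c a e := h12 d b c a e
  have q21 : u b d c a e = u b d a c e := h34 b d c a e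
  have q22 : u a d e b c = u a d b e c := h34 a d e b c
  have q23 : u a d b e c = u a d b c e := h45 a d b e c
  have q24 : u e a d b c = u a e d b c := h12 e a d b c
  have q25 : u a e d b c = u a e b d c := h34 a e d b c
  have q26 : u a e b d c = u a e b c d := h45 a e b d c
  have q27 : u a c e b d = u a c b e d := h34 a c e b d
  have q28 : u a c b e d = u a c b d e := h45 a c b e d
  have q29 : u e a c b d = u a e c b d := h12 e a c b d
  have q30 : u a e c b d = u a e b c d := h34 a e c b d
  have q31 : u a c d b e = u a c b d e := h34 a c d b e
  have q32 : u d a c b e = u a d c b e := h12 d a c b e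
  have q33 : u a d c b e = u a d b c e := h34 a d c b e
  have q34 : u a b e c d = u a b c e d := h34 a b e c d
  have q35 : u a b c e d = u a b c d e := h45 a b c e d
  have q36 : u e a b c d = u a e b c d := h12 e a b c d
  have q37 : u a b d c e = u a b c d e := h34 a b d c e
  have q38 : u d a b c e = u a d b c e := h12 d a b c e
  have q39 : u c a b d e = u a c b d e := h12 c a b d e
  have r0 := hcyc c d e a b
  have r1 := hcyc b d e a c
  have r2 := hcyc b c e a d
  have r3 := hcyc b c d a e
  have r4 := hcyc a d e b c
  have r5 := hcyc a c e b d
  have r6 := hcyc a c d b e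
  have r7 := hcyc a b e c d
  have r8 := hcyc a b d c e
  have r9 := hcyc a b c d e
  linarith [q0, q1, q2, q3, q4, q5, q6, q7, q8, q9, q10, q11, q12, q13, q14, q15, q16, q17, q18, q19, q20, q21, q22, q23, q24, q25, q26, q27, q28, q29, q30, q31, q32, q33, q34, q35, q36, q37, q38, q39, r0, r1, r2, r3, r4, r5, r6, r7, r8, r9]

set_option maxHeartbeats 4000000 in
theorem killingTensor_E3_form (C : (Fin 3 → ℝ) → Fin 3 → Fin 3 → ℝ)
    (hC : ∀ a b, ContDiff ℝ (⊤ : ℕ∞) fun x => C x a b)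
    (hCsym : ∀ x a b, C x a b = C x b a) :
    (∀ x a b c, pd (fun y => C y a b) c x + pd (fun y => C y b c) a x
        + pd (fun y => C y c a) b x = 0)
    ↔ ∃ a₁ a₂ a₃ a₄ a₅ a₆ a₇ a₈ a₉ a₁₀ a₁₁ a₁₂ a₁₃ a₁₄ a₁₅ a₁₆ a₁₇ a₁₈ a₁₉ a₂₀ : ℝ,
        ∀ p : Fin 3 → ℝ,
          C p 0 0 = (a₆/2) * (p 1)^2 + (a₁/2) * (p 2)^2 + a₄ * p 1 * p 2
              + a₅ * p 1 + a₂ * p 2 + a₃ ∧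
          C p 0 1 = (a₁₀/2) * (p 2)^2 - (a₆/2) * p 0 * p 1 - (a₄/2) * p 0 * p 2
              - (a₁₄/2) * p 1 * p 2 - (a₅/2) * p 0 - (a₁₅/2) * p 1 + a₁₆ * p 2 + a₁₇ ∧
          C p 0 2 = (a₁₄/2) * (p 1)^2 - (a₄/2) * p 0 * p 1 - (a₁/2) * p 0 * p 2
              - (a₁₀/2) * p 1 * p 2 - (a₂/2) * p 0 + a₁₈ * p 1 - (a₁₁/2) * p 2 + a₁₉ ∧
          C p 1 1 = (a₆/2) * (p 0)^2 + (a₇/2) * (p 2)^2 + a₁₄ * p 0 * p 2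
              + a₁₅ * p 0 + a₁₂ * p 2 + a₁₃ ∧
          C p 1 2 = (a₄/2) * (p 0)^2 - (a₁₄/2) * p 0 * p 1 - (a₁₀/2) * p 0 * p 2
              - (a₇/2) * p 1 * p 2 - (a₁₆ + a₁₈) * p 0 - (a₁₂/2) * p 1
              - (a₈/2) * p 2 + a₂₀ ∧
          C p 2 2 = (a₁/2) * (p 0)^2 + (a₇/2) * (p 1)^2 + a₁₀ * p 0 * p 1
              + a₁₁ * p 0 + a₈ * p 1 + a₉ := by
  constructor
  · intro hK
    have hU : ∀ (a b c d e : Fin 3) (x : Fin 3 → ℝ),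
        pd (pd (pd (fun y => C y a b) c) d) e x = 0 := by
      intro a b c d e x
      refine petersen (fun a b c d e => pd (pd (pd (fun y => C y a b) c) d) e x)
        ?_ ?_ ?_ ?_ a b c d e
      · intro p q r s t
        rw [show (fun y => C y p q) = (fun y => C y q p) from funext fun y => hCsym y p q]
      · intro p q r s t
        exact congrFun (congrArg (fun g => pd g t)
          (funext fun y => pd_comm (hC p q) r s y)) x
      · intro p q r s t
        exact pd_comm (contDiff_pd (hC p q) r) s t x
      · intro p q r s t
        have d1 : Differentiable ℝ (pd (fun z => C z p q) r) :=
          (contDiff_pd (hC p q) r).differentiable (by simp)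
        have d2 : Differentiable ℝ (pd (fun z => C z q r) p) :=
          (contDiff_pd (hC q r) p).differentiable (by simp)
        have d3 : Differentiable ℝ (pd (fun z => C z r p) q) :=
          (contDiff_pd (hC r p) q).differentiable (by simp)
        have e1 : pd (fun y => pd (fun z => C z p q) r y + pd (fun z => C z q r) p y
            + pd (fun z => C z r p) q y) s = fun y =>
            pd (pd (fun z => C z p q) r) s y + pd (pd (fun z => C z q r) p) s y
            + pd (pd (fun z => C z r p) q) s y := by
          funext y
          rw [pd_add (d1.fun_add d2) d3, pd_add d1 d2]
        have d1' : Differentiable ℝ (pd (pd (fun z => C z p q) r) s) :=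
          (contDiff_pd (contDiff_pd (hC p q) r) s).differentiable (by simp)
        have d2' : Differentiable ℝ (pd (pd (fun z => C z q r) p) s) :=
          (contDiff_pd (contDiff_pd (hC q r) p) s).differentiable (by simp)
        have d3' : Differentiable ℝ (pd (pd (fun z => C z r p) q) s) :=
          (contDiff_pd (contDiff_pd (hC r p) q) s).differentiable (by simp)
        have key : pd (pd (fun y => pd (fun z => C z p q) r y + pd (fun z => C z q r) p y
            + pd (fun z => C z r p) q y) s) t x
            = pd (pd (pd (fun z => C z p q) r) s) t x + pd (pd (pd (fun z => C z q r) p) s) t x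
            + pd (pd (pd (fun z => C z r p) q) s) t x := by
          rw [e1, pd_add (d1'.fun_add d2') d3', pd_add d1' d2']
        have h0 : (fun y => pd (fun z => C z p q) r y + pd (fun z => C z q r) p y
            + pd (fun z => C z r p) q y) = fun _ => (0:ℝ) := funext fun y => hK y p q r
        have z0 : pd (pd (fun y => pd (fun z => C z p q) r y + pd (fun z => C z q r) p y
            + pd (fun z => C z r p) q y) s) t x = 0 := by
          rw [h0, show pd (fun _ => (0:ℝ)) s = fun _ => 0 from funext fun y => pd_const 0 s y]
          exact pd_const 0 t x
        linarith [key, z0]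
    have hrepr : ∀ a b : Fin 3, (fun y => C y a b) = qform (C 0 a b)
        (fun c => pd (fun y => C y a b) c 0) (fun c d => pd (pd (fun y => C y a b) c) d 0) :=
      fun a b => rep (hC a b) (fun c d e x => hU a b c d e x)
    have hs34 : ∀ a b c d : Fin 3, pd (pd (fun y => C y a b) c) d 0
        = pd (pd (fun y => C y a b) d) c 0 := fun a b c d => pd_comm (hC a b) c d 0
    have hs12 : ∀ a b c d : Fin 3, pd (pd (fun y => C y a b) c) d 0
        = pd (pd (fun y => C y b a) c) d 0 := by
      intro a b c d
      rw [show (fun y => C y a b) = (fun y => C y b a) from funext fun y => hCsym y a b]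
    have hl12 : ∀ a b c : Fin 3, pd (fun y => C y a b) c 0 = pd (fun y => C y b a) c 0 := by
      intro a b c
      rw [show (fun y => C y a b) = (fun y => C y b a) from funext fun y => hCsym y a b]
    have hpdF : ∀ (a b c : Fin 3) (x : Fin 3 → ℝ), pd (fun y => C y a b) c x
        = pd (fun y => C y a b) c 0 + (pd (pd (fun y => C y a b) c) 0 0 * x 0
          + pd (pd (fun y => C y a b) c) 1 0 * x 1 + pd (pd (fun y => C y a b) c) 2 0 * x 2) := by
      intro a b c x
      conv_lhs => rw [hrepr a b]
      exact pd_qform _ _ _ (fun c d => hs34 a b c d) c x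
    have hK0 : ∀ a b c : Fin 3, pd (fun y => C y a b) c 0 + pd (fun y => C y b c) a 0
        + pd (fun y => C y c a) b 0 = 0 := fun a b c => hK 0 a b c
    have hKs : ∀ a b c d : Fin 3, pd (pd (fun y => C y a b) c) d 0
        + pd (pd (fun y => C y b c) a) d 0 + pd (pd (fun y => C y c a) b) d 0 = 0 := by
      intro a b c d
      have h1 := hK (Pi.single d 1) a b c
      rw [hpdF a b c _, hpdF b c a _, hpdF c a b _] at h1
      have h2 := hK0 a b c
      fin_cases d <;> simp [Pi.single_apply] at h1 ⊢ <;> linarith [h1, h2]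
    have fs_00_00 : pd (pd (fun y => C y 0 0) 0) 0 0 = (0 : ℝ) := by
      linear_combination ((1 : ℝ)/3) * (hKs 0 0 0 0)
    have fs_00_01 : pd (pd (fun y => C y 0 0) 0) 1 0 = (0 : ℝ) := by
      linear_combination ((1 : ℝ)/3) * (hKs 0 0 0 1)
    have fs_00_02 : pd (pd (fun y => C y 0 0) 0) 2 0 = (0 : ℝ) := by
      linear_combination ((1 : ℝ)/3) * (hKs 0 0 0 2)
    have fs_00_10 : pd (pd (fun y => C y 0 0) 1) 0 0 = (0 : ℝ) := by
      linear_combination (1 : ℝ) * (hs34 0 0 1 0) + ((1 : ℝ)/3) * (hKs 0 0 0 1)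
    have fs_00_11 : pd (pd (fun y => C y 0 0) 1) 1 0 = (1 : ℝ) * (pd (pd (fun y => C y 0 0) 1) 1 0) := by
      linear_combination (0 : ℝ)
    have fs_00_12 : pd (pd (fun y => C y 0 0) 1) 2 0 = (1 : ℝ) * (pd (pd (fun y => C y 0 0) 1) 2 0) := by
      linear_combination (0 : ℝ)
    have fs_00_20 : pd (pd (fun y => C y 0 0) 2) 0 0 = (0 : ℝ) := by
      linear_combination (1 : ℝ) * (hs34 0 0 2 0) + ((1 : ℝ)/3) * (hKs 0 0 0 2)
    have fs_00_21 : pd (pd (fun y => C y 0 0) 2) 1 0 = (1 : ℝ) * (pd (pd (fun y => C y 0 0) 1) 2 0) := by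
      linear_combination (1 : ℝ) * (hs34 0 0 2 1)
    have fs_00_22 : pd (pd (fun y => C y 0 0) 2) 2 0 = (1 : ℝ) * (pd (pd (fun y => C y 0 0) 2) 2 0) := by
      linear_combination (0 : ℝ)
    have fl_00_0 : pd (fun y => C y 0 0) 0 0 = (0 : ℝ) := by
      linear_combination ((1 : ℝ)/3) * (hK0 0 0 0)
    have fl_00_1 : pd (fun y => C y 0 0) 1 0 = (1 : ℝ) * (pd (fun y => C y 0 0) 1 0) := by
      linear_combination (0 : ℝ)
    have fl_00_2 : pd (fun y => C y 0 0) 2 0 = (1 : ℝ) * (pd (fun y => C y 0 0) 2 0) := by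
      linear_combination (0 : ℝ)
    have fs_01_00 : pd (pd (fun y => C y 0 1) 0) 0 0 = (0 : ℝ) := by
      linear_combination ((-1 : ℝ)/6) * (hKs 0 0 0 1) + ((1 : ℝ)/2) * (hKs 0 0 1 0) + ((-1 : ℝ)/2) * (hs34 0 0 1 0) + ((-1 : ℝ)/2) * (hs12 1 0 0 0)
    have fs_01_01 : pd (pd (fun y => C y 0 1) 0) 1 0 = ((-1 : ℝ)/2) * (pd (pd (fun y => C y 0 0) 1) 1 0) := by
      linear_combination ((1 : ℝ)/2) * (hKs 0 0 1 1) + ((-1 : ℝ)/2) * (hs12 1 0 0 1)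
    have fs_01_02 : pd (pd (fun y => C y 0 1) 0) 2 0 = ((-1 : ℝ)/2) * (pd (pd (fun y => C y 0 0) 1) 2 0) := by
      linear_combination ((1 : ℝ)/2) * (hKs 0 0 1 2) + ((-1 : ℝ)/2) * (hs12 1 0 0 2)
    have fs_01_10 : pd (pd (fun y => C y 0 1) 1) 0 0 = ((-1 : ℝ)/2) * (pd (pd (fun y => C y 0 0) 1) 1 0) := by
      linear_combination (1 : ℝ) * (hs34 0 1 1 0) + ((1 : ℝ)/2) * (hKs 0 0 1 1) + ((-1 : ℝ)/2) * (hs12 1 0 0 1)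
    have fs_01_11 : pd (pd (fun y => C y 0 1) 1) 1 0 = (0 : ℝ) := by
      linear_combination ((1 : ℝ)/2) * (hKs 0 1 1 1) + ((-1 : ℝ)/2) * (hs12 1 0 1 1) + ((-1 : ℝ)/6) * (hKs 1 1 1 0) + ((1 : ℝ)/6) * (hs34 1 1 1 0) + ((1 : ℝ)/6) * (hs34 1 1 1 0) + ((1 : ℝ)/6) * (hs34 1 1 1 0)
    have fs_01_12 : pd (pd (fun y => C y 0 1) 1) 2 0 = ((-1 : ℝ)/2) * (pd (pd (fun y => C y 1 1) 0) 2 0) := by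
      linear_combination ((1 : ℝ)/2) * (hKs 0 1 1 2) + ((-1 : ℝ)/2) * (hs12 1 0 1 2)
    have fs_01_20 : pd (pd (fun y => C y 0 1) 2) 0 0 = ((-1 : ℝ)/2) * (pd (pd (fun y => C y 0 0) 1) 2 0) := by
      linear_combination (1 : ℝ) * (hs34 0 1 2 0) + ((1 : ℝ)/2) * (hKs 0 0 1 2) + ((-1 : ℝ)/2) * (hs12 1 0 0 2)
    have fs_01_21 : pd (pd (fun y => C y 0 1) 2) 1 0 = ((-1 : ℝ)/2) * (pd (pd (fun y => C y 1 1) 0) 2 0) := by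
      linear_combination (1 : ℝ) * (hs34 0 1 2 1) + ((1 : ℝ)/2) * (hKs 0 1 1 2) + ((-1 : ℝ)/2) * (hs12 1 0 1 2)
    have fs_01_22 : pd (pd (fun y => C y 0 1) 2) 2 0 = (1 : ℝ) * (pd (pd (fun y => C y 2 2) 0) 1 0) := by
      linear_combination (1 : ℝ) * (hKs 0 1 2 2) + (-1 : ℝ) * (hs12 2 0 1 2) + ((-1 : ℝ)/2) * (hKs 0 2 2 1) + ((1 : ℝ)/2) * (hs34 0 2 2 1) + ((1 : ℝ)/2) * (hs12 2 0 2 1) + ((1 : ℝ)/2) * (hs34 0 2 2 1) + ((-1 : ℝ)/2) * (hKs 1 2 2 0) + ((1 : ℝ)/2) * (hs34 1 2 2 0) + ((1 : ℝ)/2) * (hs34 2 2 1 0) + ((1 : ℝ)/2) * (hs12 2 1 2 0) + ((1 : ℝ)/2) * (hs34 1 2 2 0)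
    have fl_01_0 : pd (fun y => C y 0 1) 0 0 = ((-1 : ℝ)/2) * (pd (fun y => C y 0 0) 1 0) := by
      linear_combination ((1 : ℝ)/2) * (hK0 0 0 1) + ((-1 : ℝ)/2) * (hl12 1 0 0)
    have fl_01_1 : pd (fun y => C y 0 1) 1 0 = ((-1 : ℝ)/2) * (pd (fun y => C y 1 1) 0 0) := by
      linear_combination ((1 : ℝ)/2) * (hK0 0 1 1) + ((-1 : ℝ)/2) * (hl12 1 0 1)
    have fl_01_2 : pd (fun y => C y 0 1) 2 0 = (1 : ℝ) * (pd (fun y => C y 0 1) 2 0) := by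
      linear_combination (0 : ℝ)
    have fs_02_00 : pd (pd (fun y => C y 0 2) 0) 0 0 = (0 : ℝ) := by
      linear_combination ((-1 : ℝ)/6) * (hKs 0 0 0 2) + ((1 : ℝ)/2) * (hKs 0 0 2 0) + ((-1 : ℝ)/2) * (hs34 0 0 2 0) + ((-1 : ℝ)/2) * (hs12 2 0 0 0)
    have fs_02_01 : pd (pd (fun y => C y 0 2) 0) 1 0 = ((-1 : ℝ)/2) * (pd (pd (fun y => C y 0 0) 1) 2 0) := by
      linear_combination ((1 : ℝ)/2) * (hKs 0 0 2 1) + ((-1 : ℝ)/2) * (hs34 0 0 2 1) + ((-1 : ℝ)/2) * (hs12 2 0 0 1)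
    have fs_02_02 : pd (pd (fun y => C y 0 2) 0) 2 0 = ((-1 : ℝ)/2) * (pd (pd (fun y => C y 0 0) 2) 2 0) := by
      linear_combination ((1 : ℝ)/2) * (hKs 0 0 2 2) + ((-1 : ℝ)/2) * (hs12 2 0 0 2)
    have fs_02_10 : pd (pd (fun y => C y 0 2) 1) 0 0 = ((-1 : ℝ)/2) * (pd (pd (fun y => C y 0 0) 1) 2 0) := by
      linear_combination (1 : ℝ) * (hs34 0 2 1 0) + ((1 : ℝ)/2) * (hKs 0 0 2 1) + ((-1 : ℝ)/2) * (hs34 0 0 2 1) + ((-1 : ℝ)/2) * (hs12 2 0 0 1)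
    have fs_02_11 : pd (pd (fun y => C y 0 2) 1) 1 0 = (1 : ℝ) * (pd (pd (fun y => C y 1 1) 0) 2 0) := by
      linear_combination ((-1 : ℝ)/2) * (hKs 0 1 1 2) + ((1 : ℝ)/2) * (hs12 1 0 1 2) + (1 : ℝ) * (hKs 0 1 2 1) + (-1 : ℝ) * (hs34 0 1 2 1) + (-1 : ℝ) * (hs12 2 0 1 1) + ((-1 : ℝ)/2) * (hKs 1 1 2 0) + ((1 : ℝ)/2) * (hs34 1 1 2 0) + ((1 : ℝ)/2) * (hs34 1 2 1 0) + ((1 : ℝ)/2) * (hs12 2 1 1 0) + ((1 : ℝ)/2) * (hs34 1 2 1 0)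
    have fs_02_12 : pd (pd (fun y => C y 0 2) 1) 2 0 = ((-1 : ℝ)/2) * (pd (pd (fun y => C y 2 2) 0) 1 0) := by
      linear_combination ((1 : ℝ)/2) * (hKs 0 2 2 1) + ((-1 : ℝ)/2) * (hs34 0 2 2 1) + ((-1 : ℝ)/2) * (hs12 2 0 2 1) + ((-1 : ℝ)/2) * (hs34 0 2 2 1)
    have fs_02_20 : pd (pd (fun y => C y 0 2) 2) 0 0 = ((-1 : ℝ)/2) * (pd (pd (fun y => C y 0 0) 2) 2 0) := by
      linear_combination (1 : ℝ) * (hs34 0 2 2 0) + ((1 : ℝ)/2) * (hKs 0 0 2 2) + ((-1 : ℝ)/2) * (hs12 2 0 0 2)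
    have fs_02_21 : pd (pd (fun y => C y 0 2) 2) 1 0 = ((-1 : ℝ)/2) * (pd (pd (fun y => C y 2 2) 0) 1 0) := by
      linear_combination (1 : ℝ) * (hs34 0 2 2 1) + ((1 : ℝ)/2) * (hKs 0 2 2 1) + ((-1 : ℝ)/2) * (hs34 0 2 2 1) + ((-1 : ℝ)/2) * (hs12 2 0 2 1) + ((-1 : ℝ)/2) * (hs34 0 2 2 1)
    have fs_02_22 : pd (pd (fun y => C y 0 2) 2) 2 0 = (0 : ℝ) := by
      linear_combination ((1 : ℝ)/2) * (hKs 0 2 2 2) + ((-1 : ℝ)/2) * (hs12 2 0 2 2) + ((-1 : ℝ)/6) * (hKs 2 2 2 0) + ((1 : ℝ)/6) * (hs34 2 2 2 0) + ((1 : ℝ)/6) * (hs34 2 2 2 0) + ((1 : ℝ)/6) * (hs34 2 2 2 0)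
    have fl_02_0 : pd (fun y => C y 0 2) 0 0 = ((-1 : ℝ)/2) * (pd (fun y => C y 0 0) 2 0) := by
      linear_combination ((1 : ℝ)/2) * (hK0 0 0 2) + ((-1 : ℝ)/2) * (hl12 2 0 0)
    have fl_02_1 : pd (fun y => C y 0 2) 1 0 = (1 : ℝ) * (pd (fun y => C y 0 2) 1 0) := by
      linear_combination (0 : ℝ)
    have fl_02_2 : pd (fun y => C y 0 2) 2 0 = ((-1 : ℝ)/2) * (pd (fun y => C y 2 2) 0 0) := by
      linear_combination ((1 : ℝ)/2) * (hK0 0 2 2) + ((-1 : ℝ)/2) * (hl12 2 0 2)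
    have fs_11_00 : pd (pd (fun y => C y 1 1) 0) 0 0 = (1 : ℝ) * (pd (pd (fun y => C y 0 0) 1) 1 0) := by
      linear_combination (-1 : ℝ) * (hKs 0 0 1 1) + (1 : ℝ) * (hs12 1 0 0 1) + (1 : ℝ) * (hKs 0 1 1 0) + (-1 : ℝ) * (hs34 0 1 1 0) + (-1 : ℝ) * (hs12 1 0 1 0) + (-1 : ℝ) * (hs34 0 1 1 0)
    have fs_11_01 : pd (pd (fun y => C y 1 1) 0) 1 0 = (0 : ℝ) := by
      linear_combination ((1 : ℝ)/3) * (hKs 1 1 1 0) + ((-1 : ℝ)/3) * (hs34 1 1 1 0) + ((-1 : ℝ)/3) * (hs34 1 1 1 0) + ((-1 : ℝ)/3) * (hs34 1 1 1 0)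
    have fs_11_02 : pd (pd (fun y => C y 1 1) 0) 2 0 = (1 : ℝ) * (pd (pd (fun y => C y 1 1) 0) 2 0) := by
      linear_combination (0 : ℝ)
    have fs_11_10 : pd (pd (fun y => C y 1 1) 1) 0 0 = (0 : ℝ) := by
      linear_combination (1 : ℝ) * (hs34 1 1 1 0) + ((1 : ℝ)/3) * (hKs 1 1 1 0) + ((-1 : ℝ)/3) * (hs34 1 1 1 0) + ((-1 : ℝ)/3) * (hs34 1 1 1 0) + ((-1 : ℝ)/3) * (hs34 1 1 1 0)
    have fs_11_11 : pd (pd (fun y => C y 1 1) 1) 1 0 = (0 : ℝ) := by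
      linear_combination ((1 : ℝ)/3) * (hKs 1 1 1 1)
    have fs_11_12 : pd (pd (fun y => C y 1 1) 1) 2 0 = (0 : ℝ) := by
      linear_combination ((1 : ℝ)/3) * (hKs 1 1 1 2)
    have fs_11_20 : pd (pd (fun y => C y 1 1) 2) 0 0 = (1 : ℝ) * (pd (pd (fun y => C y 1 1) 0) 2 0) := by
      linear_combination (1 : ℝ) * (hs34 1 1 2 0)
    have fs_11_21 : pd (pd (fun y => C y 1 1) 2) 1 0 = (0 : ℝ) := by
      linear_combination (1 : ℝ) * (hs34 1 1 2 1) + ((1 : ℝ)/3) * (hKs 1 1 1 2)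
    have fs_11_22 : pd (pd (fun y => C y 1 1) 2) 2 0 = (1 : ℝ) * (pd (pd (fun y => C y 1 1) 2) 2 0) := by
      linear_combination (0 : ℝ)
    have fl_11_0 : pd (fun y => C y 1 1) 0 0 = (1 : ℝ) * (pd (fun y => C y 1 1) 0 0) := by
      linear_combination (0 : ℝ)
    have fl_11_1 : pd (fun y => C y 1 1) 1 0 = (0 : ℝ) := by
      linear_combination ((1 : ℝ)/3) * (hK0 1 1 1)
    have fl_11_2 : pd (fun y => C y 1 1) 2 0 = (1 : ℝ) * (pd (fun y => C y 1 1) 2 0) := by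
      linear_combination (0 : ℝ)
    have fs_12_00 : pd (pd (fun y => C y 1 2) 0) 0 0 = (1 : ℝ) * (pd (pd (fun y => C y 0 0) 1) 2 0) := by
      linear_combination ((-1 : ℝ)/2) * (hKs 0 0 1 2) + ((1 : ℝ)/2) * (hs12 1 0 0 2) + ((-1 : ℝ)/2) * (hKs 0 0 2 1) + ((1 : ℝ)/2) * (hs34 0 0 2 1) + ((1 : ℝ)/2) * (hs12 2 0 0 1) + (1 : ℝ) * (hKs 0 1 2 0) + (-1 : ℝ) * (hs34 0 1 2 0) + (-1 : ℝ) * (hs12 2 0 1 0) + (-1 : ℝ) * (hs34 0 2 1 0)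
    have fs_12_01 : pd (pd (fun y => C y 1 2) 0) 1 0 = ((-1 : ℝ)/2) * (pd (pd (fun y => C y 1 1) 0) 2 0) := by
      linear_combination ((1 : ℝ)/2) * (hKs 1 1 2 0) + ((-1 : ℝ)/2) * (hs34 1 1 2 0) + ((-1 : ℝ)/2) * (hs34 1 2 1 0) + ((-1 : ℝ)/2) * (hs12 2 1 1 0) + ((-1 : ℝ)/2) * (hs34 1 2 1 0)
    have fs_12_02 : pd (pd (fun y => C y 1 2) 0) 2 0 = ((-1 : ℝ)/2) * (pd (pd (fun y => C y 2 2) 0) 1 0) := by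
      linear_combination ((1 : ℝ)/2) * (hKs 1 2 2 0) + ((-1 : ℝ)/2) * (hs34 1 2 2 0) + ((-1 : ℝ)/2) * (hs34 2 2 1 0) + ((-1 : ℝ)/2) * (hs12 2 1 2 0) + ((-1 : ℝ)/2) * (hs34 1 2 2 0)
    have fs_12_10 : pd (pd (fun y => C y 1 2) 1) 0 0 = ((-1 : ℝ)/2) * (pd (pd (fun y => C y 1 1) 0) 2 0) := by
      linear_combination (1 : ℝ) * (hs34 1 2 1 0) + ((1 : ℝ)/2) * (hKs 1 1 2 0) + ((-1 : ℝ)/2) * (hs34 1 1 2 0) + ((-1 : ℝ)/2) * (hs34 1 2 1 0) + ((-1 : ℝ)/2) * (hs12 2 1 1 0) + ((-1 : ℝ)/2) * (hs34 1 2 1 0)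
    have fs_12_11 : pd (pd (fun y => C y 1 2) 1) 1 0 = (0 : ℝ) := by
      linear_combination ((-1 : ℝ)/6) * (hKs 1 1 1 2) + ((1 : ℝ)/2) * (hKs 1 1 2 1) + ((-1 : ℝ)/2) * (hs34 1 1 2 1) + ((-1 : ℝ)/2) * (hs12 2 1 1 1)
    have fs_12_12 : pd (pd (fun y => C y 1 2) 1) 2 0 = ((-1 : ℝ)/2) * (pd (pd (fun y => C y 1 1) 2) 2 0) := by
      linear_combination ((1 : ℝ)/2) * (hKs 1 1 2 2) + ((-1 : ℝ)/2) * (hs12 2 1 1 2)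
    have fs_12_20 : pd (pd (fun y => C y 1 2) 2) 0 0 = ((-1 : ℝ)/2) * (pd (pd (fun y => C y 2 2) 0) 1 0) := by
      linear_combination (1 : ℝ) * (hs34 1 2 2 0) + ((1 : ℝ)/2) * (hKs 1 2 2 0) + ((-1 : ℝ)/2) * (hs34 1 2 2 0) + ((-1 : ℝ)/2) * (hs34 2 2 1 0) + ((-1 : ℝ)/2) * (hs12 2 1 2 0) + ((-1 : ℝ)/2) * (hs34 1 2 2 0)
    have fs_12_21 : pd (pd (fun y => C y 1 2) 2) 1 0 = ((-1 : ℝ)/2) * (pd (pd (fun y => C y 1 1) 2) 2 0) := by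
      linear_combination (1 : ℝ) * (hs34 1 2 2 1) + ((1 : ℝ)/2) * (hKs 1 1 2 2) + ((-1 : ℝ)/2) * (hs12 2 1 1 2)
    have fs_12_22 : pd (pd (fun y => C y 1 2) 2) 2 0 = (0 : ℝ) := by
      linear_combination ((1 : ℝ)/2) * (hKs 1 2 2 2) + ((-1 : ℝ)/2) * (hs12 2 1 2 2) + ((-1 : ℝ)/6) * (hKs 2 2 2 1) + ((1 : ℝ)/6) * (hs34 2 2 2 1) + ((1 : ℝ)/6) * (hs34 2 2 2 1) + ((1 : ℝ)/6) * (hs34 2 2 2 1)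
    have fl_12_0 : pd (fun y => C y 1 2) 0 0 = (-1 : ℝ) * (pd (fun y => C y 0 1) 2 0) + (-1 : ℝ) * (pd (fun y => C y 0 2) 1 0) := by
      linear_combination (1 : ℝ) * (hK0 0 1 2) + (-1 : ℝ) * (hl12 2 0 1)
    have fl_12_1 : pd (fun y => C y 1 2) 1 0 = ((-1 : ℝ)/2) * (pd (fun y => C y 1 1) 2 0) := by
      linear_combination ((1 : ℝ)/2) * (hK0 1 1 2) + ((-1 : ℝ)/2) * (hl12 2 1 1)
    have fl_12_2 : pd (fun y => C y 1 2) 2 0 = ((-1 : ℝ)/2) * (pd (fun y => C y 2 2) 1 0) := by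
      linear_combination ((1 : ℝ)/2) * (hK0 1 2 2) + ((-1 : ℝ)/2) * (hl12 2 1 2)
    have fs_22_00 : pd (pd (fun y => C y 2 2) 0) 0 0 = (1 : ℝ) * (pd (pd (fun y => C y 0 0) 2) 2 0) := by
      linear_combination (-1 : ℝ) * (hKs 0 0 2 2) + (1 : ℝ) * (hs12 2 0 0 2) + (1 : ℝ) * (hKs 0 2 2 0) + (-1 : ℝ) * (hs34 0 2 2 0) + (-1 : ℝ) * (hs12 2 0 2 0) + (-1 : ℝ) * (hs34 0 2 2 0)
    have fs_22_01 : pd (pd (fun y => C y 2 2) 0) 1 0 = (1 : ℝ) * (pd (pd (fun y => C y 2 2) 0) 1 0) := by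
      linear_combination (0 : ℝ)
    have fs_22_02 : pd (pd (fun y => C y 2 2) 0) 2 0 = (0 : ℝ) := by
      linear_combination ((1 : ℝ)/3) * (hKs 2 2 2 0) + ((-1 : ℝ)/3) * (hs34 2 2 2 0) + ((-1 : ℝ)/3) * (hs34 2 2 2 0) + ((-1 : ℝ)/3) * (hs34 2 2 2 0)
    have fs_22_10 : pd (pd (fun y => C y 2 2) 1) 0 0 = (1 : ℝ) * (pd (pd (fun y => C y 2 2) 0) 1 0) := by
      linear_combination (1 : ℝ) * (hs34 2 2 1 0)
    have fs_22_11 : pd (pd (fun y => C y 2 2) 1) 1 0 = (1 : ℝ) * (pd (pd (fun y => C y 1 1) 2) 2 0) := by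
      linear_combination (-1 : ℝ) * (hKs 1 1 2 2) + (1 : ℝ) * (hs12 2 1 1 2) + (1 : ℝ) * (hKs 1 2 2 1) + (-1 : ℝ) * (hs34 1 2 2 1) + (-1 : ℝ) * (hs12 2 1 2 1) + (-1 : ℝ) * (hs34 1 2 2 1)
    have fs_22_12 : pd (pd (fun y => C y 2 2) 1) 2 0 = (0 : ℝ) := by
      linear_combination ((1 : ℝ)/3) * (hKs 2 2 2 1) + ((-1 : ℝ)/3) * (hs34 2 2 2 1) + ((-1 : ℝ)/3) * (hs34 2 2 2 1) + ((-1 : ℝ)/3) * (hs34 2 2 2 1)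
    have fs_22_20 : pd (pd (fun y => C y 2 2) 2) 0 0 = (0 : ℝ) := by
      linear_combination (1 : ℝ) * (hs34 2 2 2 0) + ((1 : ℝ)/3) * (hKs 2 2 2 0) + ((-1 : ℝ)/3) * (hs34 2 2 2 0) + ((-1 : ℝ)/3) * (hs34 2 2 2 0) + ((-1 : ℝ)/3) * (hs34 2 2 2 0)
    have fs_22_21 : pd (pd (fun y => C y 2 2) 2) 1 0 = (0 : ℝ) := by
      linear_combination (1 : ℝ) * (hs34 2 2 2 1) + ((1 : ℝ)/3) * (hKs 2 2 2 1) + ((-1 : ℝ)/3) * (hs34 2 2 2 1) + ((-1 : ℝ)/3) * (hs34 2 2 2 1) + ((-1 : ℝ)/3) * (hs34 2 2 2 1)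
    have fs_22_22 : pd (pd (fun y => C y 2 2) 2) 2 0 = (0 : ℝ) := by
      linear_combination ((1 : ℝ)/3) * (hKs 2 2 2 2)
    have fl_22_0 : pd (fun y => C y 2 2) 0 0 = (1 : ℝ) * (pd (fun y => C y 2 2) 0 0) := by
      linear_combination (0 : ℝ)
    have fl_22_1 : pd (fun y => C y 2 2) 1 0 = (1 : ℝ) * (pd (fun y => C y 2 2) 1 0) := by
      linear_combination (0 : ℝ)
    have fl_22_2 : pd (fun y => C y 2 2) 2 0 = (0 : ℝ) := by
      linear_combination ((1 : ℝ)/3) * (hK0 2 2 2)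
    refine ⟨pd (pd (fun y => C y 0 0) 2) 2 0, pd (fun y => C y 0 0) 2 0, C 0 0 0, pd (pd (fun y => C y 0 0) 1) 2 0, pd (fun y => C y 0 0) 1 0, pd (pd (fun y => C y 0 0) 1) 1 0, pd (pd (fun y => C y 1 1) 2) 2 0, pd (fun y => C y 2 2) 1 0, C 0 2 2, pd (pd (fun y => C y 2 2) 0) 1 0, pd (fun y => C y 2 2) 0 0, pd (fun y => C y 1 1) 2 0, C 0 1 1, pd (pd (fun y => C y 1 1) 0) 2 0, pd (fun y => C y 1 1) 0 0, pd (fun y => C y 0 1) 2 0, C 0 0 1, pd (fun y => C y 0 2) 1 0, C 0 0 2, C 0 1 2, fun p => ?_⟩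
    refine ⟨?_, ?_, ?_, ?_, ?_, ?_⟩
    · have eAB : C p 0 0 = qform (C 0 0 0) (fun c => pd (fun y => C y 0 0) c 0) (fun c d => pd (pd (fun y => C y 0 0) c) d 0) p := congrFun (hrepr 0 0) p
      rw [eAB]; simp only [qform]
      linear_combination (p 0 * p 0 / 2) * (fs_00_00) + (p 0 * p 1 / 2) * (fs_00_01) + (p 0 * p 2 / 2) * (fs_00_02) + (p 0) * (fl_00_0) + (p 1 * p 0 / 2) * (fs_00_10) + (p 1 * p 1 / 2) * (fs_00_11) + (p 1 * p 2 / 2) * (fs_00_12) + (p 1) * (fl_00_1) + (p 2 * p 0 / 2) * (fs_00_20) + (p 2 * p 1 / 2) * (fs_00_21) + (p 2 * p 2 / 2) * (fs_00_22) + (p 2) * (fl_00_2)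
    · have eAB : C p 0 1 = qform (C 0 0 1) (fun c => pd (fun y => C y 0 1) c 0) (fun c d => pd (pd (fun y => C y 0 1) c) d 0) p := congrFun (hrepr 0 1) p
      rw [eAB]; simp only [qform]
      linear_combination (p 0 * p 0 / 2) * (fs_01_00) + (p 0 * p 1 / 2) * (fs_01_01) + (p 0 * p 2 / 2) * (fs_01_02) + (p 0) * (fl_01_0) + (p 1 * p 0 / 2) * (fs_01_10) + (p 1 * p 1 / 2) * (fs_01_11) + (p 1 * p 2 / 2) * (fs_01_12) + (p 1) * (fl_01_1) + (p 2 * p 0 / 2) * (fs_01_20) + (p 2 * p 1 / 2) * (fs_01_21) + (p 2 * p 2 / 2) * (fs_01_22) + (p 2) * (fl_01_2)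
    · have eAB : C p 0 2 = qform (C 0 0 2) (fun c => pd (fun y => C y 0 2) c 0) (fun c d => pd (pd (fun y => C y 0 2) c) d 0) p := congrFun (hrepr 0 2) p
      rw [eAB]; simp only [qform]
      linear_combination (p 0 * p 0 / 2) * (fs_02_00) + (p 0 * p 1 / 2) * (fs_02_01) + (p 0 * p 2 / 2) * (fs_02_02) + (p 0) * (fl_02_0) + (p 1 * p 0 / 2) * (fs_02_10) + (p 1 * p 1 / 2) * (fs_02_11) + (p 1 * p 2 / 2) * (fs_02_12) + (p 1) * (fl_02_1) + (p 2 * p 0 / 2) * (fs_02_20) + (p 2 * p 1 / 2) * (fs_02_21) + (p 2 * p 2 / 2) * (fs_02_22) + (p 2) * (fl_02_2)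
    · have eAB : C p 1 1 = qform (C 0 1 1) (fun c => pd (fun y => C y 1 1) c 0) (fun c d => pd (pd (fun y => C y 1 1) c) d 0) p := congrFun (hrepr 1 1) p
      rw [eAB]; simp only [qform]
      linear_combination (p 0 * p 0 / 2) * (fs_11_00) + (p 0 * p 1 / 2) * (fs_11_01) + (p 0 * p 2 / 2) * (fs_11_02) + (p 0) * (fl_11_0) + (p 1 * p 0 / 2) * (fs_11_10) + (p 1 * p 1 / 2) * (fs_11_11) + (p 1 * p 2 / 2) * (fs_11_12) + (p 1) * (fl_11_1) + (p 2 * p 0 / 2) * (fs_11_20) + (p 2 * p 1 / 2) * (fs_11_21) + (p 2 * p 2 / 2) * (fs_11_22) + (p 2) * (fl_11_2)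
    · have eAB : C p 1 2 = qform (C 0 1 2) (fun c => pd (fun y => C y 1 2) c 0) (fun c d => pd (pd (fun y => C y 1 2) c) d 0) p := congrFun (hrepr 1 2) p
      rw [eAB]; simp only [qform]
      linear_combination (p 0 * p 0 / 2) * (fs_12_00) + (p 0 * p 1 / 2) * (fs_12_01) + (p 0 * p 2 / 2) * (fs_12_02) + (p 0) * (fl_12_0) + (p 1 * p 0 / 2) * (fs_12_10) + (p 1 * p 1 / 2) * (fs_12_11) + (p 1 * p 2 / 2) * (fs_12_12) + (p 1) * (fl_12_1) + (p 2 * p 0 / 2) * (fs_12_20) + (p 2 * p 1 / 2) * (fs_12_21) + (p 2 * p 2 / 2) * (fs_12_22) + (p 2) * (fl_12_2)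
    · have eAB : C p 2 2 = qform (C 0 2 2) (fun c => pd (fun y => C y 2 2) c 0) (fun c d => pd (pd (fun y => C y 2 2) c) d 0) p := congrFun (hrepr 2 2) p
      rw [eAB]; simp only [qform]
      linear_combination (p 0 * p 0 / 2) * (fs_22_00) + (p 0 * p 1 / 2) * (fs_22_01) + (p 0 * p 2 / 2) * (fs_22_02) + (p 0) * (fl_22_0) + (p 1 * p 0 / 2) * (fs_22_10) + (p 1 * p 1 / 2) * (fs_22_11) + (p 1 * p 2 / 2) * (fs_22_12) + (p 1) * (fl_22_1) + (p 2 * p 0 / 2) * (fs_22_20) + (p 2 * p 1 / 2) * (fs_22_21) + (p 2 * p 2 / 2) * (fs_22_22) + (p 2) * (fl_22_2)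
  · rintro ⟨a1, a2, a3, a4, a5, a6, a7, a8, a9, a10, a11, a12, a13, a14, a15, a16, a17, a18, a19, a20, hh⟩
    intro x a b c
    have hsym00 : ∀ c d : Fin 3, (![(![(0 : ℝ), (0 : ℝ), (0 : ℝ)] : Fin 3 → ℝ), (![(0 : ℝ), (1 : ℝ) * (a6), (1 : ℝ) * (a4)] : Fin 3 → ℝ), (![(0 : ℝ), (1 : ℝ) * (a4), (1 : ℝ) * (a1)] : Fin 3 → ℝ)] : Fin 3 → Fin 3 → ℝ) c d = (![(![(0 : ℝ), (0 : ℝ), (0 : ℝ)] : Fin 3 → ℝ), (![(0 : ℝ), (1 : ℝ) * (a6), (1 : ℝ) * (a4)] : Fin 3 → ℝ), (![(0 : ℝ), (1 : ℝ) * (a4), (1 : ℝ) * (a1)] : Fin 3 → ℝ)] : Fin 3 → Fin 3 → ℝ) d c := by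
      intro c d; fin_cases c <;> fin_cases d <;> simp [Matrix.cons_val_zero, Matrix.cons_val_one, Matrix.head_cons, Matrix.cons_val_two, Matrix.tail_cons, Matrix.vecHead, Matrix.vecTail, Function.comp]
    have hsym01 : ∀ c d : Fin 3, (![(![(0 : ℝ), ((-1 : ℝ)/2) * (a6), ((-1 : ℝ)/2) * (a4)] : Fin 3 → ℝ), (![((-1 : ℝ)/2) * (a6), (0 : ℝ), ((-1 : ℝ)/2) * (a14)] : Fin 3 → ℝ), (![((-1 : ℝ)/2) * (a4), ((-1 : ℝ)/2) * (a14), (1 : ℝ) * (a10)] : Fin 3 → ℝ)] : Fin 3 → Fin 3 → ℝ) c d = (![(![(0 : ℝ), ((-1 : ℝ)/2) * (a6), ((-1 : ℝ)/2) * (a4)] : Fin 3 → ℝ), (![((-1 : ℝ)/2) * (a6), (0 : ℝ), ((-1 : ℝ)/2) * (a14)] : Fin 3 → ℝ), (![((-1 : ℝ)/2) * (a4), ((-1 : ℝ)/2) * (a14), (1 : ℝ) * (a10)] : Fin 3 → ℝ)] : Fin 3 → Fin 3 → ℝ) d c := by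
      intro c d; fin_cases c <;> fin_cases d <;> simp [Matrix.cons_val_zero, Matrix.cons_val_one, Matrix.head_cons, Matrix.cons_val_two, Matrix.tail_cons, Matrix.vecHead, Matrix.vecTail, Function.comp]
    have hsym02 : ∀ c d : Fin 3, (![(![(0 : ℝ), ((-1 : ℝ)/2) * (a4), ((-1 : ℝ)/2) * (a1)] : Fin 3 → ℝ), (![((-1 : ℝ)/2) * (a4), (1 : ℝ) * (a14), ((-1 : ℝ)/2) * (a10)] : Fin 3 → ℝ), (![((-1 : ℝ)/2) * (a1), ((-1 : ℝ)/2) * (a10), (0 : ℝ)] : Fin 3 → ℝ)] : Fin 3 → Fin 3 → ℝ) c d = (![(![(0 : ℝ), ((-1 : ℝ)/2) * (a4), ((-1 : ℝ)/2) * (a1)] : Fin 3 → ℝ), (![((-1 : ℝ)/2) * (a4), (1 : ℝ) * (a14), ((-1 : ℝ)/2) * (a10)] : Fin 3 → ℝ), (![((-1 : ℝ)/2) * (a1), ((-1 : ℝ)/2) * (a10), (0 : ℝ)] : Fin 3 → ℝ)] : Fin 3 → Fin 3 → ℝ) d c := by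
      intro c d; fin_cases c <;> fin_cases d <;> simp [Matrix.cons_val_zero, Matrix.cons_val_one, Matrix.head_cons, Matrix.cons_val_two, Matrix.tail_cons, Matrix.vecHead, Matrix.vecTail, Function.comp]
    have hsym11 : ∀ c d : Fin 3, (![(![(1 : ℝ) * (a6), (0 : ℝ), (1 : ℝ) * (a14)] : Fin 3 → ℝ), (![(0 : ℝ), (0 : ℝ), (0 : ℝ)] : Fin 3 → ℝ), (![(1 : ℝ) * (a14), (0 : ℝ), (1 : ℝ) * (a7)] : Fin 3 → ℝ)] : Fin 3 → Fin 3 → ℝ) c d = (![(![(1 : ℝ) * (a6), (0 : ℝ), (1 : ℝ) * (a14)] : Fin 3 → ℝ), (![(0 : ℝ), (0 : ℝ), (0 : ℝ)] : Fin 3 → ℝ), (![(1 : ℝ) * (a14), (0 : ℝ), (1 : ℝ) * (a7)] : Fin 3 → ℝ)] : Fin 3 → Fin 3 → ℝ) d c := by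
      intro c d; fin_cases c <;> fin_cases d <;> simp [Matrix.cons_val_zero, Matrix.cons_val_one, Matrix.head_cons, Matrix.cons_val_two, Matrix.tail_cons, Matrix.vecHead, Matrix.vecTail, Function.comp]
    have hsym12 : ∀ c d : Fin 3, (![(![(1 : ℝ) * (a4), ((-1 : ℝ)/2) * (a14), ((-1 : ℝ)/2) * (a10)] : Fin 3 → ℝ), (![((-1 : ℝ)/2) * (a14), (0 : ℝ), ((-1 : ℝ)/2) * (a7)] : Fin 3 → ℝ), (![((-1 : ℝ)/2) * (a10), ((-1 : ℝ)/2) * (a7), (0 : ℝ)] : Fin 3 → ℝ)] : Fin 3 → Fin 3 → ℝ) c d = (![(![(1 : ℝ) * (a4), ((-1 : ℝ)/2) * (a14), ((-1 : ℝ)/2) * (a10)] : Fin 3 → ℝ), (![((-1 : ℝ)/2) * (a14), (0 : ℝ), ((-1 : ℝ)/2) * (a7)] : Fin 3 → ℝ), (![((-1 : ℝ)/2) * (a10), ((-1 : ℝ)/2) * (a7), (0 : ℝ)] : Fin 3 → ℝ)] : Fin 3 → Fin 3 → ℝ) d c := by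
      intro c d; fin_cases c <;> fin_cases d <;> simp [Matrix.cons_val_zero, Matrix.cons_val_one, Matrix.head_cons, Matrix.cons_val_two, Matrix.tail_cons, Matrix.vecHead, Matrix.vecTail, Function.comp]
    have hsym22 : ∀ c d : Fin 3, (![(![(1 : ℝ) * (a1), (1 : ℝ) * (a10), (0 : ℝ)] : Fin 3 → ℝ), (![(1 : ℝ) * (a10), (1 : ℝ) * (a7), (0 : ℝ)] : Fin 3 → ℝ), (![(0 : ℝ), (0 : ℝ), (0 : ℝ)] : Fin 3 → ℝ)] : Fin 3 → Fin 3 → ℝ) c d = (![(![(1 : ℝ) * (a1), (1 : ℝ) * (a10), (0 : ℝ)] : Fin 3 → ℝ), (![(1 : ℝ) * (a10), (1 : ℝ) * (a7), (0 : ℝ)] : Fin 3 → ℝ), (![(0 : ℝ), (0 : ℝ), (0 : ℝ)] : Fin 3 → ℝ)] : Fin 3 → Fin 3 → ℝ) d c := by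
      intro c d; fin_cases c <;> fin_cases d <;> simp [Matrix.cons_val_zero, Matrix.cons_val_one, Matrix.head_cons, Matrix.cons_val_two, Matrix.tail_cons, Matrix.vecHead, Matrix.vecTail, Function.comp]
    have r00 : (fun y => C y 0 0) = qform a3 ![(0 : ℝ), (1 : ℝ) * (a5), (1 : ℝ) * (a2)] ![(![(0 : ℝ), (0 : ℝ), (0 : ℝ)] : Fin 3 → ℝ), (![(0 : ℝ), (1 : ℝ) * (a6), (1 : ℝ) * (a4)] : Fin 3 → ℝ), (![(0 : ℝ), (1 : ℝ) * (a4), (1 : ℝ) * (a1)] : Fin 3 → ℝ)] := by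
      funext p
      rw [show C p 0 0 = _ from (hh p).1]
      simp [qform, Matrix.cons_val_zero, Matrix.cons_val_one, Matrix.head_cons, Matrix.cons_val_two, Matrix.tail_cons, Matrix.vecHead, Matrix.vecTail, Function.comp]; ring
    have r01 : (fun y => C y 0 1) = qform a17 ![((-1 : ℝ)/2) * (a5), ((-1 : ℝ)/2) * (a15), (1 : ℝ) * (a16)] ![(![(0 : ℝ), ((-1 : ℝ)/2) * (a6), ((-1 : ℝ)/2) * (a4)] : Fin 3 → ℝ), (![((-1 : ℝ)/2) * (a6), (0 : ℝ), ((-1 : ℝ)/2) * (a14)] : Fin 3 → ℝ), (![((-1 : ℝ)/2) * (a4), ((-1 : ℝ)/2) * (a14), (1 : ℝ) * (a10)] : Fin 3 → ℝ)] := by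
      funext p
      rw [show C p 0 1 = _ from (hh p).2.1]
      simp [qform, Matrix.cons_val_zero, Matrix.cons_val_one, Matrix.head_cons, Matrix.cons_val_two, Matrix.tail_cons, Matrix.vecHead, Matrix.vecTail, Function.comp]; ring
    have r02 : (fun y => C y 0 2) = qform a19 ![((-1 : ℝ)/2) * (a2), (1 : ℝ) * (a18), ((-1 : ℝ)/2) * (a11)] ![(![(0 : ℝ), ((-1 : ℝ)/2) * (a4), ((-1 : ℝ)/2) * (a1)] : Fin 3 → ℝ), (![((-1 : ℝ)/2) * (a4), (1 : ℝ) * (a14), ((-1 : ℝ)/2) * (a10)] : Fin 3 → ℝ), (![((-1 : ℝ)/2) * (a1), ((-1 : ℝ)/2) * (a10), (0 : ℝ)] : Fin 3 → ℝ)] := by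
      funext p
      rw [show C p 0 2 = _ from (hh p).2.2.1]
      simp [qform, Matrix.cons_val_zero, Matrix.cons_val_one, Matrix.head_cons, Matrix.cons_val_two, Matrix.tail_cons, Matrix.vecHead, Matrix.vecTail, Function.comp]; ring
    have r11 : (fun y => C y 1 1) = qform a13 ![(1 : ℝ) * (a15), (0 : ℝ), (1 : ℝ) * (a12)] ![(![(1 : ℝ) * (a6), (0 : ℝ), (1 : ℝ) * (a14)] : Fin 3 → ℝ), (![(0 : ℝ), (0 : ℝ), (0 : ℝ)] : Fin 3 → ℝ), (![(1 : ℝ) * (a14), (0 : ℝ), (1 : ℝ) * (a7)] : Fin 3 → ℝ)] := by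
      funext p
      rw [show C p 1 1 = _ from (hh p).2.2.2.1]
      simp [qform, Matrix.cons_val_zero, Matrix.cons_val_one, Matrix.head_cons, Matrix.cons_val_two, Matrix.tail_cons, Matrix.vecHead, Matrix.vecTail, Function.comp]; ring
    have r12 : (fun y => C y 1 2) = qform a20 ![(-1 : ℝ) * (a16) + (-1 : ℝ) * (a18), ((-1 : ℝ)/2) * (a12), ((-1 : ℝ)/2) * (a8)] ![(![(1 : ℝ) * (a4), ((-1 : ℝ)/2) * (a14), ((-1 : ℝ)/2) * (a10)] : Fin 3 → ℝ), (![((-1 : ℝ)/2) * (a14), (0 : ℝ), ((-1 : ℝ)/2) * (a7)] : Fin 3 → ℝ), (![((-1 : ℝ)/2) * (a10), ((-1 : ℝ)/2) * (a7), (0 : ℝ)] : Fin 3 → ℝ)] := by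
      funext p
      rw [show C p 1 2 = _ from (hh p).2.2.2.2.1]
      simp [qform, Matrix.cons_val_zero, Matrix.cons_val_one, Matrix.head_cons, Matrix.cons_val_two, Matrix.tail_cons, Matrix.vecHead, Matrix.vecTail, Function.comp]; ring
    have r22 : (fun y => C y 2 2) = qform a9 ![(1 : ℝ) * (a11), (1 : ℝ) * (a8), (0 : ℝ)] ![(![(1 : ℝ) * (a1), (1 : ℝ) * (a10), (0 : ℝ)] : Fin 3 → ℝ), (![(1 : ℝ) * (a10), (1 : ℝ) * (a7), (0 : ℝ)] : Fin 3 → ℝ), (![(0 : ℝ), (0 : ℝ), (0 : ℝ)] : Fin 3 → ℝ)] := by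
      funext p
      rw [show C p 2 2 = _ from (hh p).2.2.2.2.2]
      simp [qform, Matrix.cons_val_zero, Matrix.cons_val_one, Matrix.head_cons, Matrix.cons_val_two, Matrix.tail_cons, Matrix.vecHead, Matrix.vecTail, Function.comp]; ring
    have r10 : (fun y => C y 1 0) = qform a17 ![((-1 : ℝ)/2) * (a5), ((-1 : ℝ)/2) * (a15), (1 : ℝ) * (a16)] ![(![(0 : ℝ), ((-1 : ℝ)/2) * (a6), ((-1 : ℝ)/2) * (a4)] : Fin 3 → ℝ), (![((-1 : ℝ)/2) * (a6), (0 : ℝ), ((-1 : ℝ)/2) * (a14)] : Fin 3 → ℝ), (![((-1 : ℝ)/2) * (a4), ((-1 : ℝ)/2) * (a14), (1 : ℝ) * (a10)] : Fin 3 → ℝ)] := by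
      funext p
      rw [show C p 1 0 = C p 0 1 from hCsym p 1 0, show C p 0 1 = _ from (hh p).2.1]
      simp [qform, Matrix.cons_val_zero, Matrix.cons_val_one, Matrix.head_cons, Matrix.cons_val_two, Matrix.tail_cons, Matrix.vecHead, Matrix.vecTail, Function.comp]; ring
    have r20 : (fun y => C y 2 0) = qform a19 ![((-1 : ℝ)/2) * (a2), (1 : ℝ) * (a18), ((-1 : ℝ)/2) * (a11)] ![(![(0 : ℝ), ((-1 : ℝ)/2) * (a4), ((-1 : ℝ)/2) * (a1)] : Fin 3 → ℝ), (![((-1 : ℝ)/2) * (a4), (1 : ℝ) * (a14), ((-1 : ℝ)/2) * (a10)] : Fin 3 → ℝ), (![((-1 : ℝ)/2) * (a1), ((-1 : ℝ)/2) * (a10), (0 : ℝ)] : Fin 3 → ℝ)] := by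
      funext p
      rw [show C p 2 0 = C p 0 2 from hCsym p 2 0, show C p 0 2 = _ from (hh p).2.2.1]
      simp [qform, Matrix.cons_val_zero, Matrix.cons_val_one, Matrix.head_cons, Matrix.cons_val_two, Matrix.tail_cons, Matrix.vecHead, Matrix.vecTail, Function.comp]; ring
    have r21 : (fun y => C y 2 1) = qform a20 ![(-1 : ℝ) * (a16) + (-1 : ℝ) * (a18), ((-1 : ℝ)/2) * (a12), ((-1 : ℝ)/2) * (a8)] ![(![(1 : ℝ) * (a4), ((-1 : ℝ)/2) * (a14), ((-1 : ℝ)/2) * (a10)] : Fin 3 → ℝ), (![((-1 : ℝ)/2) * (a14), (0 : ℝ), ((-1 : ℝ)/2) * (a7)] : Fin 3 → ℝ), (![((-1 : ℝ)/2) * (a10), ((-1 : ℝ)/2) * (a7), (0 : ℝ)] : Fin 3 → ℝ)] := by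
      funext p
      rw [show C p 2 1 = C p 1 2 from hCsym p 2 1, show C p 1 2 = _ from (hh p).2.2.2.2.1]
      simp [qform, Matrix.cons_val_zero, Matrix.cons_val_one, Matrix.head_cons, Matrix.cons_val_two, Matrix.tail_cons, Matrix.vecHead, Matrix.vecTail, Function.comp]; ring
    have pq00 := pd_qform a3 ![(0 : ℝ), (1 : ℝ) * (a5), (1 : ℝ) * (a2)] ![(![(0 : ℝ), (0 : ℝ), (0 : ℝ)] : Fin 3 → ℝ), (![(0 : ℝ), (1 : ℝ) * (a6), (1 : ℝ) * (a4)] : Fin 3 → ℝ), (![(0 : ℝ), (1 : ℝ) * (a4), (1 : ℝ) * (a1)] : Fin 3 → ℝ)] hsym00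
    have pq01 := pd_qform a17 ![((-1 : ℝ)/2) * (a5), ((-1 : ℝ)/2) * (a15), (1 : ℝ) * (a16)] ![(![(0 : ℝ), ((-1 : ℝ)/2) * (a6), ((-1 : ℝ)/2) * (a4)] : Fin 3 → ℝ), (![((-1 : ℝ)/2) * (a6), (0 : ℝ), ((-1 : ℝ)/2) * (a14)] : Fin 3 → ℝ), (![((-1 : ℝ)/2) * (a4), ((-1 : ℝ)/2) * (a14), (1 : ℝ) * (a10)] : Fin 3 → ℝ)] hsym01
    have pq02 := pd_qform a19 ![((-1 : ℝ)/2) * (a2), (1 : ℝ) * (a18), ((-1 : ℝ)/2) * (a11)] ![(![(0 : ℝ), ((-1 : ℝ)/2) * (a4), ((-1 : ℝ)/2) * (a1)] : Fin 3 → ℝ), (![((-1 : ℝ)/2) * (a4), (1 : ℝ) * (a14), ((-1 : ℝ)/2) * (a10)] : Fin 3 → ℝ), (![((-1 : ℝ)/2) * (a1), ((-1 : ℝ)/2) * (a10), (0 : ℝ)] : Fin 3 → ℝ)] hsym02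
    have pq11 := pd_qform a13 ![(1 : ℝ) * (a15), (0 : ℝ), (1 : ℝ) * (a12)] ![(![(1 : ℝ) * (a6), (0 : ℝ), (1 : ℝ) * (a14)] : Fin 3 → ℝ), (![(0 : ℝ), (0 : ℝ), (0 : ℝ)] : Fin 3 → ℝ), (![(1 : ℝ) * (a14), (0 : ℝ), (1 : ℝ) * (a7)] : Fin 3 → ℝ)] hsym11
    have pq12 := pd_qform a20 ![(-1 : ℝ) * (a16) + (-1 : ℝ) * (a18), ((-1 : ℝ)/2) * (a12), ((-1 : ℝ)/2) * (a8)] ![(![(1 : ℝ) * (a4), ((-1 : ℝ)/2) * (a14), ((-1 : ℝ)/2) * (a10)] : Fin 3 → ℝ), (![((-1 : ℝ)/2) * (a14), (0 : ℝ), ((-1 : ℝ)/2) * (a7)] : Fin 3 → ℝ), (![((-1 : ℝ)/2) * (a10), ((-1 : ℝ)/2) * (a7), (0 : ℝ)] : Fin 3 → ℝ)] hsym12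
    have pq22 := pd_qform a9 ![(1 : ℝ) * (a11), (1 : ℝ) * (a8), (0 : ℝ)] ![(![(1 : ℝ) * (a1), (1 : ℝ) * (a10), (0 : ℝ)] : Fin 3 → ℝ), (![(1 : ℝ) * (a10), (1 : ℝ) * (a7), (0 : ℝ)] : Fin 3 → ℝ), (![(0 : ℝ), (0 : ℝ), (0 : ℝ)] : Fin 3 → ℝ)] hsym22
    fin_cases a <;> fin_cases b <;> fin_cases c <;>
      simp only [Fin.reduceFinMk, Fin.zero_eta, Fin.mk_one, r00, r01, r02, r10, r11, r12, r20, r21, r22, pq00, pq01, pq02, pq11, pq12, pq22] <;>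
      simp [Matrix.cons_val_zero, Matrix.cons_val_one, Matrix.head_cons, Matrix.cons_val_two, Matrix.tail_cons, Matrix.vecHead, Matrix.vecTail, Function.comp] <;> ring
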